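/- Let ρ be a positive semidefinite 2×2 complex matrix and |γ⟩ a unit vector in ℂ² with real coefficients in the computational basis. If Tr(ρ |b⟩⟨b|) = Tr(|γ⟩⟨γ| |b⟩⟨b|) for all b ∈ {0, π/4, π/2}, then ρ = |γ⟩⟨γ|. -/
import Mathlib


open Kronecker Matrix Real
open scoped ComplexOrder

/-- The qubit state `|b⟩ = cos b |0⟩ + sin b |1⟩`. -/
noncomputable def ket (b : ℝ) : Fin 2 → ℂ :=
  fun i => if i = 0 then (Real.cos b : ℂ) else (Real.sin b : ℂ)

/-- The projector `|b⟩⟨b|`. -/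
noncomputable def proj (b : ℝ) : Matrix (Fin 2) (Fin 2) ℂ :=
  fun i j => ket b i * (starRingEnd ℂ) (ket b j)

/-- The EPR state `|φ⁺⟩ = (|00⟩ + |11⟩)/√2` as a vector on `Fin 2 × Fin 2`. -/
noncomputable def epr : Fin 2 × Fin 2 → ℂ :=
  fun p => if p.1 = p.2 then (1 / Real.sqrt 2 : ℝ) else 0

/-- The outer product `|u⟩⟨v|` of two vectors on an index type `ι`. -/
noncomputable def outer {ι : Type*} (u v : ι → ℂ) : Matrix ι ι ℂ :=
  fun i j => u i * (starRingEnd ℂ) (v j)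
/-- tomography of a real one-qubit state: if a positive
semidefinite `ρ` has the same statistics as `|γ⟩⟨γ|` (with `γ` a real unit
vector) on the projectors `|b⟩⟨b|` for `b ∈ {0, π/4, π/2}`, then `ρ = |γ⟩⟨γ|`. -/
theorem stmt5 (ρ : Matrix (Fin 2) (Fin 2) ℂ) (hρ : ρ.PosSemidef)
    (c : Fin 2 → ℝ) (hc : c 0 ^ 2 + c 1 ^ 2 = 1)
    (γ : Fin 2 → ℂ) (hγ : γ = fun i => (c i : ℂ))
    (h : ∀ b ∈ ({0, π / 4, π / 2} : Set ℝ),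
        (ρ * proj b).trace = (outer γ γ * proj b).trace) :
    ρ = outer γ γ := by
  subst hγ
  have h0 := h 0 (by simp)
  have h1 := h (π/4) (by simp)
  have h2 := h (π/2) (by simp)
  simp only [Matrix.trace, Matrix.mul_apply, Fin.sum_univ_two, proj, ket, outer,
    Real.cos_pi_div_four, Real.sin_pi_div_four, Real.cos_zero, Real.sin_zero,
    Real.cos_pi_div_two, Real.sin_pi_div_two, Matrix.diag_apply] at h0 h1 h2
  norm_num [Complex.conj_ofReal] at h0 h1 h2
  simp only [map_ofNat] at h1
  have hkey : ((Real.sqrt 2 : ℂ) / 2) * ((Real.sqrt 2 : ℂ) / 2) = 1/2 := by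
    rw [div_mul_div_comm, ← Complex.ofReal_mul, Real.mul_self_sqrt (by norm_num : (0:ℝ) ≤ 2)]
    norm_num
  have h0' : ρ 0 0 = (c 0 : ℂ) * c 0 := h0
  have h2' : ρ 1 1 = (c 1 : ℂ) * c 1 := h2
  have hsum : ρ 0 1 + ρ 1 0 = 2 * (c 0 : ℂ) * c 1 := by
    rw [hkey] at h1
    linear_combination 2 * h1 - h0 - h2
  have hH : ρ 1 0 = (starRingEnd ℂ) (ρ 0 1) := by
    have := congrFun (congrFun hρ.1 1) 0
    simpa [Matrix.conjTranspose_apply] using this.symm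
  set x : Fin 2 → ℂ := ![(c 1 : ℂ), -(c 0 : ℂ)] with hx
  have hq : star x ⬝ᵥ ρ *ᵥ x = 0 := by
    simp only [hx, dotProduct, Matrix.mulVec, Fin.sum_univ_two,
      Pi.star_apply, Matrix.cons_val_zero, Matrix.cons_val_one, Matrix.head_cons,
      star_neg, map_neg, Complex.star_def, Complex.conj_ofReal]
    linear_combination ((c 1:ℂ)*(c 1)) * h0' + ((c 0:ℂ)*(c 0)) * h2' - ((c 0:ℂ)*(c 1)) * hsum
  have hkz := (hρ.dotProduct_mulVec_zero_iff x).mp hq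
  have hk0 := congrFun hkz 0
  have hk1 := congrFun hkz 1
  simp only [hx, Matrix.mulVec, dotProduct, Fin.sum_univ_two,
    Matrix.cons_val_zero, Matrix.cons_val_one, Matrix.head_cons, Pi.zero_apply] at hk0 hk1
  have h01 : ρ 0 1 = (c 0 : ℂ) * c 1 := by
    rcases eq_or_ne (c 0) 0 with hc0 | hc0
    · have hc1 : (c 1 : ℝ) ≠ 0 := by
        intro hc1; rw [hc0, hc1] at hc; norm_num at hc
      have hc1' : (c 1 : ℂ) ≠ 0 := by exact_mod_cast hc1
      have h10 : ρ 1 0 = 0 := by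
        have : ρ 1 0 * (c 1 : ℂ) = 0 := by
          rw [h2'] at hk1
          push_cast [hc0] at hk1 ⊢
          linear_combination hk1
        exact (mul_eq_zero.mp this).resolve_right hc1'
      have : ρ 0 1 = (starRingEnd ℂ) (ρ 1 0) := by
        rw [hH, Complex.conj_conj]
      rw [this, h10, map_zero, hc0]
      push_cast; ring
    · have hc0' : (c 0 : ℂ) ≠ 0 := by exact_mod_cast hc0
      have : ρ 0 1 * (c 0 : ℂ) = (c 0 : ℂ) * c 1 * (c 0 : ℂ) := by
        rw [h0'] at hk0
        linear_combination -hk0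
      exact mul_right_cancel₀ hc0' this
  have h10 : ρ 1 0 = (c 1 : ℂ) * c 0 := by
    rw [hH, h01]
    simp [Complex.conj_ofReal, mul_comm]
  ext i j
  fin_cases i <;> fin_cases j <;>
    simp [outer, h0', h2', h01, h10, Complex.conj_ofReal]
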